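/- arXiv:2502.02010 — 6 statements merged into one kernel-verified Lean document; each statement's English description precedes it below -/
import Mathlib

section
/- Let g : ℝⁿ → ℝ be differentiable with gradient ∇g that is L-Lipschitz on the segment from θ to θ + p. Suppose ⟨∇g(θ), p⟩ + g(θ) − β ≤ 0, that β ≤ G − (1/2)‖p‖², and that g(θ) ≤ G. Then for every α ∈ [0, 1], g(θ + α p) ≤ G − (α/2)‖p‖² + L α² ‖p‖². -/
open RealInnerProductSpace Set

/-!
Along the segment the gradient drifts by at most `L t ‖p‖` from `∇g(θ)`, so
`t ↦ g(θ + t p) - t ⟪∇g(θ), p⟫ - (L/2) t² ‖p‖²` is antitone on `[0, 1]`; this is the descent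
lemma `g(θ + p) ≤ g(θ) + ⟪∇g(θ), p⟫ + (L/2)‖p‖²`. Applied to the step `α p`, the constraint
bounds `α ⟪∇g(θ), p⟫` by `α (G - ‖p‖²/2 - g(θ))`, and `g(θ) ≤ G` absorbs the remaining
`(1 - α) g(θ)`.
-/

section GradientAlongSegment

variable {E : Type*} [NormedAddCommGroup E] [InnerProductSpace ℝ E]
  {f : E → ℝ} {f' : E → E} {x p : E} {L : ℝ}

theorem add_smul_mem_segment {t : ℝ} (ht : t ∈ Icc (0 : ℝ) 1) :
    x + t • p ∈ segment ℝ x (x + p) := by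
  rw [segment_eq_image']
  exact ⟨t, ht, by simp⟩

theorem inner_sub_le_of_lipschitz_segment
    (hLip : ∀ y ∈ segment ℝ x (x + p), ‖f' y - f' x‖ ≤ L * ‖y - x‖)
    {t : ℝ} (ht : t ∈ Icc (0 : ℝ) 1) :
    ⟪f' (x + t • p) - f' x, p⟫ ≤ L * t * ‖p‖ ^ 2 := by
  have hdist : ‖f' (x + t • p) - f' x‖ ≤ L * (t * ‖p‖) := by
    simpa [norm_smul, abs_of_nonneg ht.1] using hLip _ (add_smul_mem_segment ht)
  calc ⟪f' (x + t • p) - f' x, p⟫ ≤ ‖f' (x + t • p) - f' x‖ * ‖p‖ := real_inner_le_norm _ _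
    _ ≤ L * (t * ‖p‖) * ‖p‖ := mul_le_mul_of_nonneg_right hdist (norm_nonneg p)
    _ = L * t * ‖p‖ ^ 2 := by ring

variable [CompleteSpace E]

theorem HasGradientAt.hasDerivAt_comp_add_smul {v : E} {t : ℝ}
    (hf : HasGradientAt f v (x + t • p)) :
    HasDerivAt (fun s : ℝ => f (x + s • p)) ⟪v, p⟫ t := by
  have hline : HasDerivAt (fun s : ℝ => x + s • p) p t := by
    simpa using ((hasDerivAt_id t).smul_const p).const_add x
  exact (by simpa using hf.hasFDerivAt.comp_hasDerivAt t hline :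
    HasDerivAt (f ∘ fun s : ℝ => x + s • p) ⟪v, p⟫ t)

theorem le_add_inner_add_of_lipschitz_segment
    (hf : ∀ y ∈ segment ℝ x (x + p), HasGradientAt f (f' y) y)
    (hLip : ∀ y ∈ segment ℝ x (x + p), ‖f' y - f' x‖ ≤ L * ‖y - x‖) :
    f (x + p) ≤ f x + ⟪f' x, p⟫ + L / 2 * ‖p‖ ^ 2 := by
  set φ : ℝ → ℝ := fun t => f (x + t • p) - t * ⟪f' x, p⟫ - L / 2 * t ^ 2 * ‖p‖ ^ 2
  have hφ' : ∀ t ∈ Icc (0 : ℝ) 1,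
      HasDerivAt φ (⟪f' (x + t • p), p⟫ - ⟪f' x, p⟫ - L * t * ‖p‖ ^ 2) t := by
    intro t ht
    have hquad := ((hasDerivAt_pow 2 t).const_mul (L / 2)).mul_const (‖p‖ ^ 2)
    have h := (((hf _ (add_smul_mem_segment ht)).hasDerivAt_comp_add_smul).sub
      ((hasDerivAt_id t).mul_const ⟪f' x, p⟫)).sub hquad
    exact h.congr_deriv (by norm_num only; ring)
  have hanti : AntitoneOn φ (Icc 0 1) := by
    refine antitoneOn_of_hasDerivWithinAt_nonpos (convex_Icc 0 1)
      (fun t ht => (hφ' t ht).continuousAt.continuousWithinAt)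
      (fun t ht => (hφ' t (interior_subset ht)).hasDerivWithinAt) fun t ht => ?_
    have hdrift := inner_sub_le_of_lipschitz_segment hLip (interior_subset ht)
    rw [inner_sub_left] at hdrift
    linarith
  have h01 := hanti (left_mem_Icc.2 zero_le_one) (right_mem_Icc.2 zero_le_one) zero_le_one
  simp only [φ, one_smul, one_mul, one_pow, mul_one, zero_smul, add_zero, zero_mul, sub_zero,
    ne_eq, OfNat.ofNat_ne_zero, not_false_eq_true, zero_pow, mul_zero] at h01
  linarith

end GradientAlongSegment

/-- Descent estimate for an active index: if `g` is differentiable with an `L`-Lipschitz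
gradient on the segment from `θ` to `θ + p`, `⟪∇g(θ), p⟫ + g(θ) - β ≤ 0`,
`β ≤ G - (1/2)‖p‖²` and `g(θ) ≤ G`, then for every `α ∈ [0,1]`,
`g(θ + α p) ≤ G - (α/2)‖p‖² + L α² ‖p‖²`. -/
theorem descent_estimate_active_index
    {n : ℕ} (g : EuclideanSpace ℝ (Fin n) → ℝ)
    (g' : EuclideanSpace ℝ (Fin n) → EuclideanSpace ℝ (Fin n))
    (hg : ∀ x, HasGradientAt g (g' x) x)
    (θ p : EuclideanSpace ℝ (Fin n)) (β G L : ℝ) (hL : 0 < L)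
    (hLip : ∀ x ∈ segment ℝ θ (θ + p), ∀ y ∈ segment ℝ θ (θ + p),
      ‖g' x - g' y‖ ≤ L * ‖x - y‖)
    (hcon : ⟪g' θ, p⟫ + g θ - β ≤ 0)
    (hβ : β ≤ G - (1/2) * ‖p‖^2)
    (hgθ : g θ ≤ G) :
    ∀ α ∈ Set.Icc (0:ℝ) 1,
      g (θ + α • p) ≤ G - (α/2) * ‖p‖^2 + L * α^2 * ‖p‖^2 := by
  intro α hα
  have hsub : segment ℝ θ (θ + α • p) ⊆ segment ℝ θ (θ + p) :=
    (convex_segment θ (θ + p)).segment_subset (left_mem_segment ℝ _ _) (add_smul_mem_segment hα)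
  have hdescent := le_add_inner_add_of_lipschitz_segment (fun y _ => hg y)
    (fun y hy => hLip y (hsub hy) θ (left_mem_segment ℝ _ _))
  rw [real_inner_smul_right, norm_smul, mul_pow, Real.norm_eq_abs, sq_abs] at hdescent
  have hinner : α * ⟪g' θ, p⟫ ≤ α * (G - 1 / 2 * ‖p‖ ^ 2 - g θ) :=
    mul_le_mul_of_nonneg_left (by linarith) hα.1
  have hslack : (1 - α) * (g θ - G) ≤ 0 :=
    mul_nonpos_of_nonneg_of_nonpos (by linarith [hα.2]) (by linarith)
  have hquad : L / 2 * (α ^ 2 * ‖p‖ ^ 2) ≤ L * α ^ 2 * ‖p‖ ^ 2 := by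
    nlinarith [mul_nonneg (sq_nonneg α) (sq_nonneg ‖p‖)]
  linarith
end

section
/- Let g_1, …, g_m : ℝⁿ → ℝ be differentiable, G(θ) = max_{1≤i≤m} g_i(θ), and let p ∈ ℝⁿ, p ≠ 0, β ∈ ℝ, ε ∈ (0, 1/2), δ > 0, L > 0, K ≥ 0. Assume: (i) for every i ∈ J_δ(θ) = {i : g_i(θ) ≥ G(θ) − δ}, ⟨∇g_i(θ), p⟩ + g_i(θ) − β ≤ 0 and ∇g_i is L-Lipschitz on the segment from θ to θ + p; (ii) β ≤ G(θ) − (1/2)‖p‖²; (iii) for every i ∉ J_δ(θ), ‖∇g_i(ξ)‖ ≤ K for ξ on the segment from θ to θ + p. Then for every α with 0 ≤ α ≤ min{1, δ/(‖p‖(K + ‖p‖/2)), (1/2 − ε)/L}, one has G(θ + α p) ≤ G(θ) − α ε ‖p‖². -/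
/-!
Every `g_i` is estimated separately along the step `α p`. For a δ-active index, the Lipschitz
bound on `∇g_i` gives the descent inequality `g_i(θ + αp) ≤ g_i(θ) + α⟪∇g_i(θ), p⟫ + Lα²‖p‖²`;
feasibility and `β ≤ G(θ) - ‖p‖²/2` turn this into `G(θ) - α‖p‖²/2 + Lα²‖p‖²`, and `Lα ≤ 1/2 - ε`
finishes. For an inactive index, the mean value bound gives `g_i(θ + αp) < G(θ) - δ + Kα‖p‖`,
and the step restriction `α‖p‖(K + ‖p‖/2) ≤ δ` makes this at most `G(θ) - α‖p‖²/2`.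
-/

open RealInnerProductSpace

/-- `G(θ) = max_{1 ≤ i ≤ m} g_i(θ)`, the pointwise maximum of finitely many functions. -/
noncomputable def maxFun {n m : ℕ} (g : Fin (m+1) → EuclideanSpace ℝ (Fin n) → ℝ)
    (θ : EuclideanSpace ℝ (Fin n)) : ℝ :=
  Finset.univ.sup' Finset.univ_nonempty (fun i => g i θ)

section Segment

variable {E : Type*} [NormedAddCommGroup E] [NormedSpace ℝ E]

lemma add_smul_mem_segment_s2 (x v : E) {t : ℝ} (ht₀ : 0 ≤ t) (ht₁ : t ≤ 1) :
    x + t • v ∈ segment ℝ x (x + v) := by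
  rw [segment_eq_image']
  exact ⟨t, ⟨ht₀, ht₁⟩, by rw [add_sub_cancel_left]⟩

lemma segment_add_smul_subset (x v : E) {t : ℝ} (ht₀ : 0 ≤ t) (ht₁ : t ≤ 1) :
    segment ℝ x (x + t • v) ⊆ segment ℝ x (x + v) :=
  (convex_segment _ _).segment_subset (left_mem_segment ℝ _ _) (add_smul_mem_segment_s2 x v ht₀ ht₁)

end Segment

section Gradient

variable {E : Type*} [NormedAddCommGroup E] [InnerProductSpace ℝ E] [CompleteSpace E]
  {f : E → ℝ} {f' : E → E} {x v : E}

lemma le_add_of_norm_gradient_le {K : ℝ} (hf : ∀ z, HasGradientAt f (f' z) z)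
    (hK : ∀ z ∈ segment ℝ x (x + v), ‖f' z‖ ≤ K) :
    f (x + v) ≤ f x + K * ‖v‖ := by
  have h := (convex_segment x (x + v)).norm_image_sub_le_of_norm_hasFDerivWithin_le
    (fun z _ => (hf z).hasFDerivAt.hasFDerivWithinAt)
    (fun z hz => by rw [LinearIsometryEquiv.norm_map]; exact hK z hz)
    (left_mem_segment ℝ _ _) (right_mem_segment ℝ _ _)
  rw [add_sub_cancel_left, Real.norm_eq_abs, abs_le] at h
  linarith [h.2]

/-- The crude descent lemma: without integrating the gradient we lose the usual factor `1/2`. -/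
lemma le_add_inner_add_of_lipschitz_gradient {L : ℝ} (hL : 0 ≤ L)
    (hf : ∀ z, HasGradientAt f (f' z) z)
    (hlip : ∀ z ∈ segment ℝ x (x + v), ‖f' z - f' x‖ ≤ L * ‖z - x‖) :
    f (x + v) ≤ f x + ⟪f' x, v⟫ + L * ‖v‖ ^ 2 := by
  have hbound : ∀ z ∈ segment ℝ x (x + v),
      ‖InnerProductSpace.toDual ℝ E (f' z) - InnerProductSpace.toDual ℝ E (f' x)‖ ≤ L * ‖v‖ := by
    intro z hz
    rw [← map_sub, LinearIsometryEquiv.norm_map]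
    calc ‖f' z - f' x‖ ≤ L * ‖z - x‖ := hlip z hz
      _ ≤ L * ‖v‖ := by
        gcongr
        simpa using norm_sub_le_of_mem_segment hz
  have h := (convex_segment x (x + v)).norm_image_sub_le_of_norm_hasFDerivWithin_le'
    (fun z _ => (hf z).hasFDerivAt.hasFDerivWithinAt) hbound
    (left_mem_segment ℝ _ _) (right_mem_segment ℝ _ _)
  rw [add_sub_cancel_left, InnerProductSpace.toDual_apply_apply, Real.norm_eq_abs, abs_le] at h
  linarith [h.2]

end Gradient

section Decrease

variable {E : Type*} [NormedAddCommGroup E] [InnerProductSpace ℝ E] [CompleteSpace E]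
  {f : E → ℝ} {f' : E → E} {θ p : E} {G β ε α : ℝ}

lemma apply_add_smul_le_sub_of_active {L : ℝ} (hL : 0 ≤ L) (hf : ∀ z, HasGradientAt f (f' z) z)
    (hlip : ∀ z ∈ segment ℝ θ (θ + p), ‖f' z - f' θ‖ ≤ L * ‖z - θ‖)
    (hfeas : ⟪f' θ, p⟫ + f θ - β ≤ 0) (hβ : β ≤ G - 1 / 2 * ‖p‖ ^ 2) (hfG : f θ ≤ G)
    (hα₀ : 0 ≤ α) (hα₁ : α ≤ 1) (hLα : L * α ≤ 1 / 2 - ε) :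
    f (θ + α • p) ≤ G - α * ε * ‖p‖ ^ 2 := by
  have hdesc := le_add_inner_add_of_lipschitz_gradient hL hf (v := α • p)
    fun z hz => hlip z (segment_add_smul_subset θ p hα₀ hα₁ hz)
  rw [real_inner_smul_right, norm_smul, Real.norm_eq_abs, abs_of_nonneg hα₀] at hdesc
  have hfeas' : α * ⟪f' θ, p⟫ ≤ α * (β - f θ) := by gcongr; linarith
  have hconv : (1 - α) * f θ ≤ (1 - α) * G := by gcongr
  have hstep : L * α * (α * ‖p‖ ^ 2) ≤ (1 / 2 - ε) * (α * ‖p‖ ^ 2) := by gcongr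
  nlinarith

lemma apply_add_smul_le_sub_of_inactive {δ K : ℝ} (hf : ∀ z, HasGradientAt f (f' z) z)
    (hK : ∀ z ∈ segment ℝ θ (θ + p), ‖f' z‖ ≤ K) (hfG : f θ < G - δ)
    (hα₀ : 0 ≤ α) (hα₁ : α ≤ 1) (hαδ : α * (‖p‖ * (K + ‖p‖ / 2)) ≤ δ) (hε : ε ≤ 1 / 2) :
    f (θ + α • p) ≤ G - α * ε * ‖p‖ ^ 2 := by
  have hmv := le_add_of_norm_gradient_le hf (v := α • p)
    fun z hz => hK z (segment_add_smul_subset θ p hα₀ hα₁ hz)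
  rw [norm_smul, Real.norm_eq_abs, abs_of_nonneg hα₀] at hmv
  have hεα : α * ε * ‖p‖ ^ 2 ≤ α * (1 / 2) * ‖p‖ ^ 2 := by gcongr
  nlinarith

end Decrease

theorem sufficient_decrease_general
    {n m : ℕ} (g : Fin (m+1) → EuclideanSpace ℝ (Fin n) → ℝ)
    (g' : Fin (m+1) → EuclideanSpace ℝ (Fin n) → EuclideanSpace ℝ (Fin n))
    (hg : ∀ i x, HasGradientAt (g i) (g' i x) x)
    (θ p : EuclideanSpace ℝ (Fin n))
    (β ε δ L K : ℝ)
    (hε : ε ∈ Set.Ioo (0:ℝ) (1/2)) (hδ : 0 < δ) (hL : 0 < L) (hK : 0 ≤ K)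
    (hactive : ∀ i, maxFun g θ - δ ≤ g i θ →
      (⟪g' i θ, p⟫ + g i θ - β ≤ 0 ∧
        ∀ x ∈ segment ℝ θ (θ + p), ∀ y ∈ segment ℝ θ (θ + p),
          ‖g' i x - g' i y‖ ≤ L * ‖x - y‖))
    (hβ : β ≤ maxFun g θ - (1/2) * ‖p‖^2)
    (hinactive : ∀ i, ¬ (maxFun g θ - δ ≤ g i θ) →
      ∀ ξ ∈ segment ℝ θ (θ + p), ‖g' i ξ‖ ≤ K) :
    ∀ α : ℝ, 0 ≤ α →
      α ≤ min 1 (min (δ / (‖p‖ * (K + ‖p‖ / 2))) ((1/2 - ε) / L)) →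
      maxFun g (θ + α • p) ≤ maxFun g θ - α * ε * ‖p‖^2 := by
  intro α hα₀ hα
  simp only [le_min_iff] at hα
  obtain ⟨hα₁, hαδ, hαL⟩ := hα
  refine Finset.sup'_le _ _ fun i _ => ?_
  have hgi : g i θ ≤ maxFun g θ := Finset.le_sup' (fun j => g j θ) (Finset.mem_univ i)
  by_cases hact : maxFun g θ - δ ≤ g i θ
  · obtain ⟨hfeas, hlip⟩ := hactive i hact
    refine apply_add_smul_le_sub_of_active hL.le (hg i)
      (fun z hz => hlip z hz θ (left_mem_segment ℝ _ _)) hfeas hβ hgi hα₀ hα₁ ?_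
    rw [mul_comm]
    exact mul_le_of_le_div₀ (by linarith [hε.2]) hL.le hαL
  · exact apply_add_smul_le_sub_of_inactive (hg i) (hinactive i hact) (not_le.mp hact) hα₀ hα₁
      (mul_le_of_le_div₀ hδ.le (by positivity) hαδ) hε.2.le

/-- Sufficient-decrease estimate: under the feasibility conditions of the subsidiary
problem for δ-active indices, the Lipschitz condition on their gradients, the bound
`β ≤ G(θ) - (1/2)‖p‖²`, and the gradient bound `K` for inactive indices, for every
`0 ≤ α ≤ min{1, δ/(‖p‖(K + ‖p‖/2)), (1/2 - ε)/L}` one has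
`G(θ + α p) ≤ G(θ) - α ε ‖p‖²`. -/
theorem sufficient_decrease
    {n m : ℕ} (g : Fin (m+1) → EuclideanSpace ℝ (Fin n) → ℝ)
    (g' : Fin (m+1) → EuclideanSpace ℝ (Fin n) → EuclideanSpace ℝ (Fin n))
    (hg : ∀ i x, HasGradientAt (g i) (g' i x) x)
    (θ p : EuclideanSpace ℝ (Fin n)) (hp : p ≠ 0)
    (β ε δ L K : ℝ)
    (hε : ε ∈ Set.Ioo (0:ℝ) (1/2)) (hδ : 0 < δ) (hL : 0 < L) (hK : 0 ≤ K)
    (hactive : ∀ i, maxFun g θ - δ ≤ g i θ →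
      (⟪g' i θ, p⟫ + g i θ - β ≤ 0 ∧
        ∀ x ∈ segment ℝ θ (θ + p), ∀ y ∈ segment ℝ θ (θ + p),
          ‖g' i x - g' i y‖ ≤ L * ‖x - y‖))
    (hβ : β ≤ maxFun g θ - (1/2) * ‖p‖^2)
    (hinactive : ∀ i, ¬ (maxFun g θ - δ ≤ g i θ) →
      ∀ ξ ∈ segment ℝ θ (θ + p), ‖g' i ξ‖ ≤ K) :
    ∀ α : ℝ, 0 ≤ α →
      α ≤ min 1 (min (δ / (‖p‖ * (K + ‖p‖ / 2))) ((1/2 - ε) / L)) →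
      maxFun g (θ + α • p) ≤ maxFun g θ - α * ε * ‖p‖^2 :=
  sufficient_decrease_general g g' hg θ p β ε δ L K hε hδ hL hK hactive hβ hinactive
end

section
/- Let σ ∈ (0, 1), α_0 > 0, let η_k ≥ 0 with Σ_{k=0}^∞ η_k < ∞, and let b : ℕ → {0, 1}. Define α_{k+1} = α_k + η_k σ^{s_k} if b_k = 0 and α_{k+1} = σ α_k if b_k = 1, where s_k = #{j < k : b_j = 1}. If b_k = 1 for infinitely many k, then α_k → 0 as k → ∞. -/
/-!
By induction, α_k ≤ σ^{s_k} (α_0 + Σ_{i<k} η_i): a failure multiplies the bound by σ, a success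
adds η_k σ^{s_k}, which the new partial sum absorbs. The second factor is bounded by α_0 + Σ η_i,
and s_k → ∞ when there are infinitely many failures, so α_k is squeezed to 0.
-/

open Filter

/-- `sCount b k` is the number of indices `j < k` with `b j = true`
(the number of unsuccessful iterations before `k`). -/
def sCount (b : ℕ → Bool) (k : ℕ) : ℕ :=
  ((Finset.range k).filter (fun j => b j = true)).card

theorem Nat.tendsto_count_atTop {p : ℕ → Prop} [DecidablePred p] (hp : {n | p n}.Infinite) :
    Tendsto (Nat.count p) atTop atTop :=
  tendsto_atTop_atTop_of_monotone (Nat.count_monotone p) fun n =>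
    ⟨Nat.nth p n, (Nat.count_nth_of_infinite hp n).ge⟩

theorem sCount_eq_count (b : ℕ → Bool) : sCount b = Nat.count (fun j => b j = true) := by
  ext k
  rw [Nat.count_eq_card_filter_range, sCount]

theorem sCount_succ (b : ℕ → Bool) (k : ℕ) :
    sCount b (k + 1) = sCount b k + if b k then 1 else 0 := by
  simp only [sCount_eq_count, Nat.count_succ]

theorem tendsto_sCount_atTop {b : ℕ → Bool} (hb : ∃ᶠ k in atTop, b k = true) :
    Tendsto (sCount b) atTop atTop := by
  rw [sCount_eq_count]
  exact Nat.tendsto_count_atTop (Nat.frequently_atTop_iff_infinite.mp hb)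

section Recursion

variable {σ : ℝ} {η : ℕ → ℝ} {b : ℕ → Bool} {α : ℕ → ℝ}
  (hrec : ∀ k, α (k+1) = if b k then σ * α k else α k + η k * σ ^ (sCount b k))
include hrec

theorem nonneg_of_stepsize_rec (hσ : 0 ≤ σ) (hη : ∀ k, 0 ≤ η k) (hα : 0 ≤ α 0) (k : ℕ) :
    0 ≤ α k := by
  induction k with
  | zero => exact hα
  | succ k ih =>
    rw [hrec k]
    split
    · positivity
    · have := hη k
      positivity

theorem le_pow_sCount_mul_of_stepsize_rec (hσ : 0 ≤ σ) (hη : ∀ k, 0 ≤ η k) (k : ℕ) :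
    α k ≤ σ ^ sCount b k * (α 0 + ∑ i ∈ Finset.range k, η i) := by
  induction k with
  | zero => simp [sCount]
  | succ k ih =>
    rw [hrec k, sCount_succ, Finset.sum_range_succ]
    cases b k
    · simp only [Bool.false_eq_true, if_false, add_zero]
      linarith
    · simp only [if_true, pow_succ]
      have := hη k
      calc σ * α k ≤ σ * (σ ^ sCount b k * (α 0 + ∑ i ∈ Finset.range k, η i)) := by gcongr
        _ = σ ^ sCount b k * σ * (α 0 + ∑ i ∈ Finset.range k, η i) := by ring
        _ ≤ σ ^ sCount b k * σ * (α 0 + (∑ i ∈ Finset.range k, η i + η k)) := by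
          gcongr
          linarith

end Recursion

/-- Contradiction step of Lemma 3.2: if there are infinitely many unsuccessful
iterations (`b k = 1`), then the step sizes tend to 0. -/
theorem stepsize_tendsto_zero_of_infinitely_many_failures
    (σ α0 : ℝ) (hσ : σ ∈ Set.Ioo (0:ℝ) 1) (hα0 : 0 < α0)
    (η : ℕ → ℝ) (hη : ∀ k, 0 ≤ η k) (hηsum : Summable η)
    (b : ℕ → Bool) (α : ℕ → ℝ)
    (h0 : α 0 = α0)
    (hrec : ∀ k, α (k+1) = if b k then σ * α k else α k + η k * σ ^ (sCount b k))
    (hinf : ∀ N : ℕ, ∃ k, N ≤ k ∧ b k = true) :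
    Tendsto α atTop (nhds 0) := by
  obtain ⟨hσ0, hσ1⟩ := hσ
  subst h0
  have hbound (k : ℕ) : α k ≤ σ ^ sCount b k * (α 0 + ∑' i, η i) :=
    (le_pow_sCount_mul_of_stepsize_rec hrec hσ0.le hη k).trans <| by
      gcongr
      exact hηsum.sum_le_tsum _ fun i _ => hη i
  have hpow : Tendsto (fun k => σ ^ sCount b k) atTop (nhds 0) :=
    (tendsto_pow_atTop_nhds_zero_of_lt_one hσ0.le hσ1).comp
      (tendsto_sCount_atTop (frequently_atTop.mpr hinf))
  refine squeeze_zero (nonneg_of_stepsize_rec hrec hσ0.le hη hα0.le) hbound ?_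
  simpa using hpow.mul_const (α 0 + ∑' i, η i)
end

section
/- Let g_1, …, g_m : ℝⁿ → ℝ be continuously differentiable and G(θ) = max_{1≤i≤m} g_i(θ). Suppose θ^k → θ* in ℝⁿ, p_k → 0 in ℝⁿ, β_k → G(θ*) in ℝ, and for each k there are weights u_k ∈ ℝᵐ with u_k^i ≥ 0, Σ_i u_k^i = 1, p_k + Σ_i u_k^i ∇g_i(θ^k) = 0, and u_k^i (⟨∇g_i(θ^k), p_k⟩ + g_i(θ^k) − β_k) = 0 for all i. Then there exists ū ∈ ℝᵐ with ū^i ≥ 0, Σ_i ū^i = 1, Σ_i ū^i ∇g_i(θ*) = 0, and ū^i (g_i(θ*) − G(θ*)) = 0 for all i. -/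
open RealInnerProductSpace Filter

theorem eq_of_tendsto_of_forall_eq {α X : Type*} [TopologicalSpace X] [T2Space X]
    {l : Filter α} [l.NeBot] {f : α → X} {a b : X}
    (h : Tendsto f l (nhds a)) (hf : ∀ k, f k = b) : a = b :=
  tendsto_nhds_unique h ((tendsto_congr hf).2 tendsto_const_nhds)

section KKTLimit

variable {α ι E : Type*} [NormedAddCommGroup E] [InnerProductSpace ℝ E]
  {l : Filter α} [l.NeBot] {g : ι → E → ℝ} {g' : ι → E → E}
  {θ p : α → E} {β : α → ℝ} {u : α → ι → ℝ} {θ₀ : E} {β₀ : ℝ} {ū : ι → ℝ}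

theorem sum_smul_eq_zero_of_tendsto [Fintype ι] (hg' : ∀ i, Continuous (g' i))
    (hθ : Tendsto θ l (nhds θ₀)) (hp : Tendsto p l (nhds 0)) (hu : Tendsto u l (nhds ū))
    (hgrad : ∀ k, p k + ∑ i, u k i • g' i (θ k) = 0) :
    ∑ i, ū i • g' i θ₀ = 0 := by
  have hlim : Tendsto (fun k => p k + ∑ i, u k i • g' i (θ k)) l
      (nhds (0 + ∑ i, ū i • g' i θ₀)) :=
    hp.add <| tendsto_finsetSum _ fun i _ =>
      (tendsto_pi_nhds.1 hu i).smul (((hg' i).tendsto θ₀).comp hθ)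
  simpa only [zero_add] using eq_of_tendsto_of_forall_eq hlim hgrad

theorem mul_sub_eq_zero_of_tendsto (hg : ∀ i, Continuous (g i))
    (hg' : ∀ i, Continuous (g' i)) (hθ : Tendsto θ l (nhds θ₀)) (hp : Tendsto p l (nhds 0))
    (hβ : Tendsto β l (nhds β₀)) (hu : Tendsto u l (nhds ū))
    (hcomp : ∀ k i, u k i * (⟪g' i (θ k), p k⟫ + g i (θ k) - β k) = 0) (i : ι) :
    ū i * (g i θ₀ - β₀) = 0 := by
  have hlim : Tendsto (fun k => u k i * (⟪g' i (θ k), p k⟫ + g i (θ k) - β k)) l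
      (nhds (ū i * (⟪g' i θ₀, 0⟫ + g i θ₀ - β₀))) :=
    (tendsto_pi_nhds.1 hu i).mul <|
      ((((hg' i).tendsto θ₀).comp hθ).inner hp).add (((hg i).tendsto θ₀).comp hθ) |>.sub hβ
  simpa only [inner_zero_right, zero_add] using
    eq_of_tendsto_of_forall_eq hlim fun k => hcomp k i

end KKTLimit

/-- Lemma 3.3: passing the KKT conditions of the subsidiary problem to the limit, any
limit point `θ*` of the iterates satisfies the stationarity conditions for `min G`. -/
theorem limit_point_satisfies_stationarity
    {n m : ℕ} (g : Fin (m+1) → EuclideanSpace ℝ (Fin n) → ℝ)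
    (g' : Fin (m+1) → EuclideanSpace ℝ (Fin n) → EuclideanSpace ℝ (Fin n))
    (hg : ∀ i x, HasGradientAt (g i) (g' i x) x)
    (hg' : ∀ i, Continuous (g' i))
    (θseq pseq : ℕ → EuclideanSpace ℝ (Fin n)) (βseq : ℕ → ℝ)
    (u : ℕ → Fin (m+1) → ℝ)
    (θstar : EuclideanSpace ℝ (Fin n))
    (hθ : Tendsto θseq atTop (nhds θstar))
    (hp : Tendsto pseq atTop (nhds 0))
    (hβ : Tendsto βseq atTop (nhds (maxFun g θstar)))
    (hu_nonneg : ∀ k i, 0 ≤ u k i)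
    (hu_sum : ∀ k, ∑ i, u k i = 1)
    (hu_grad : ∀ k, pseq k + ∑ i, u k i • g' i (θseq k) = 0)
    (hu_comp : ∀ k i, u k i * (⟪g' i (θseq k), pseq k⟫ + g i (θseq k) - βseq k) = 0) :
    ∃ ubar : Fin (m+1) → ℝ, (∀ i, 0 ≤ ubar i) ∧ (∑ i, ubar i = 1) ∧
      (∑ i, ubar i • g' i θstar = 0) ∧
      (∀ i, ubar i * (g i θstar - maxFun g θstar) = 0) := by
  have hu_mem : ∀ k, u k ∈ stdSimplex ℝ (Fin (m+1)) := fun k => ⟨hu_nonneg k, hu_sum k⟩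
  obtain ⟨ubar, ⟨hubar_nonneg, hubar_sum⟩, φ, hφ, hu_lim⟩ :=
    (isCompact_stdSimplex ℝ (Fin (m+1))).tendsto_subseq hu_mem
  have hgc : ∀ i, Continuous (g i) := fun i =>
    continuous_iff_continuousAt.2 fun x => (hg i x).continuousAt
  have hφ_lim := hφ.tendsto_atTop
  exact ⟨ubar, hubar_nonneg, hubar_sum,
    sum_smul_eq_zero_of_tendsto hg' (hθ.comp hφ_lim) (hp.comp hφ_lim) hu_lim
      fun k => hu_grad (φ k),
    mul_sub_eq_zero_of_tendsto hgc hg' (hθ.comp hφ_lim) (hp.comp hφ_lim) (hβ.comp hφ_lim)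
      hu_lim fun k => hu_comp (φ k)⟩
end

section
/- Let g_1, …, g_m : ℝⁿ → ℝ be differentiable and pseudoconvex, G(θ) = max_{1≤i≤m} g_i(θ), and θ* ∈ ℝⁿ. Suppose there exist ū^i ≥ 0 with Σ_{i=1}^m ū^i = 1, Σ_{i=1}^m ū^i ∇g_i(θ*) = 0, and ū^i (g_i(θ*) − G(θ*)) = 0 for all i. Then G(θ*) ≤ G(θ) for all θ ∈ ℝⁿ, i.e., θ* is a global minimum of G. -/
/-!
If `θ*` were not a global minimum, pick `θ` with `G θ < G θ*`. Every index `i` carrying a positive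
multiplier is active, so `g_i θ ≤ G θ < G θ* = g_i θ*`, and pseudoconvexity makes the directional
derivative `⟪∇g_i(θ*), θ - θ*⟫` negative. The weighted sum of these derivatives is then negative,
contradicting `∑ ū^i ∇g_i(θ*) = 0`.
-/

open RealInnerProductSpace

theorem le_maxFun {n m : ℕ} (g : Fin (m+1) → EuclideanSpace ℝ (Fin n) → ℝ) (i : Fin (m+1))
    (θ : EuclideanSpace ℝ (Fin n)) : g i θ ≤ maxFun g θ :=
  Finset.le_sup' (fun k => g k θ) (Finset.mem_univ i)

theorem Finset.sum_mul_neg_of_neg_of_pos {ι : Type*} {s : Finset ι} {w a : ι → ℝ}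
    (hw : ∀ i ∈ s, 0 ≤ w i) (hw_sum : 0 < ∑ i ∈ s, w i) (ha : ∀ i ∈ s, 0 < w i → a i < 0) :
    ∑ i ∈ s, w i * a i < 0 := by
  obtain ⟨j, hj, hwj⟩ : ∃ j ∈ s, (0 : ℝ) < w j :=
    Finset.exists_lt_of_sum_lt (by simpa using hw_sum)
  refine Finset.sum_neg' (fun i hi => ?_) ⟨j, hj, mul_neg_of_pos_of_neg hwj (ha j hj hwj)⟩
  rcases (hw i hi).eq_or_lt with hwi | hwi
  · simp [← hwi]
  · exact (mul_neg_of_pos_of_neg hwi (ha i hi hwi)).le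

theorem inner_sum_smul_neg {ι E : Type*} [SeminormedAddCommGroup E] [InnerProductSpace ℝ E]
    {s : Finset ι} {w : ι → ℝ} {v : ι → E} {d : E}
    (hw : ∀ i ∈ s, 0 ≤ w i) (hw_sum : 0 < ∑ i ∈ s, w i) (hv : ∀ i ∈ s, 0 < w i → ⟪v i, d⟫ < 0) :
    ⟪∑ i ∈ s, w i • v i, d⟫ < 0 := by
  simp only [sum_inner, real_inner_smul_left]
  exact Finset.sum_mul_neg_of_neg_of_pos hw hw_sum hv

theorem kkt_pseudoconvex_global_min_general
    {n m : ℕ} (g : Fin (m+1) → EuclideanSpace ℝ (Fin n) → ℝ)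
    (g' : Fin (m+1) → EuclideanSpace ℝ (Fin n) → EuclideanSpace ℝ (Fin n))
    (hpc : ∀ i, ∀ x y : EuclideanSpace ℝ (Fin n), g i y < g i x → ⟪g' i x, y - x⟫ < 0)
    (θstar : EuclideanSpace ℝ (Fin n)) (ubar : Fin (m+1) → ℝ)
    (hu_nonneg : ∀ i, 0 ≤ ubar i)
    (hu_sum : ∑ i, ubar i = 1)
    (hu_grad : ∑ i, ubar i • g' i θstar = 0)
    (hu_comp : ∀ i, ubar i * (g i θstar - maxFun g θstar) = 0) :
    ∀ θ : EuclideanSpace ℝ (Fin n), maxFun g θstar ≤ maxFun g θ := by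
  intro θ
  by_contra! hlt
  have hdescent : ∀ i ∈ Finset.univ, 0 < ubar i → ⟪g' i θstar, θ - θstar⟫ < 0 := by
    intro i _ hi
    have hactive : g i θstar = maxFun g θstar :=
      sub_eq_zero.mp ((mul_eq_zero.mp (hu_comp i)).resolve_left hi.ne')
    exact hpc i θstar θ (by linarith [le_maxFun g i θ])
  have hneg := inner_sum_smul_neg (fun i _ => hu_nonneg i) (hu_sum ▸ one_pos) hdescent
  rw [hu_grad, inner_zero_left] at hneg
  exact hneg.false

/-- Optimality content of Theorem 3.3: if the `g_i` are differentiable and pseudoconvex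
and `θ*` satisfies the KKT stationarity conditions for `min G`, then `θ*` is a global
minimum of `G`. -/
theorem kkt_pseudoconvex_global_min
    {n m : ℕ} (g : Fin (m+1) → EuclideanSpace ℝ (Fin n) → ℝ)
    (g' : Fin (m+1) → EuclideanSpace ℝ (Fin n) → EuclideanSpace ℝ (Fin n))
    (hg : ∀ i x, HasGradientAt (g i) (g' i x) x)
    (hpc : ∀ i, ∀ x y : EuclideanSpace ℝ (Fin n), g i y < g i x → ⟪g' i x, y - x⟫ < 0)
    (θstar : EuclideanSpace ℝ (Fin n)) (ubar : Fin (m+1) → ℝ)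
    (hu_nonneg : ∀ i, 0 ≤ ubar i)
    (hu_sum : ∑ i, ubar i = 1)
    (hu_grad : ∑ i, ubar i • g' i θstar = 0)
    (hu_comp : ∀ i, ubar i * (g i θstar - maxFun g θstar) = 0) :
    ∀ θ : EuclideanSpace ℝ (Fin n), maxFun g θstar ≤ maxFun g θ :=
  kkt_pseudoconvex_global_min_general g g' hpc θstar ubar hu_nonneg hu_sum hu_grad hu_comp
end

section
/- Let g_1, …, g_m : ℝⁿ → ℝ be differentiable and pseudoconvex, G(θ) = max_{1≤i≤m} g_i(θ), and θ* ∈ ℝⁿ. Suppose there exist ū^i ≥ 0 with Σ_{i=1}^m ū^i = 1, Σ_{i=1}^m ū^i ∇g_i(θ*) = 0, and ū^i (g_i(θ*) − G(θ*)) = 0 for all i. Then θ* is a weakly efficient point of the multiobjective problem min_{θ ∈ ℝⁿ} (g_1(θ), …, g_m(θ)): there is no θ ∈ ℝⁿ with g_i(θ) < g_i(θ*) for all i = 1, …, m. -/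
open RealInnerProductSpace

/-- The easy half of Gordan's alternative. -/
theorem not_exists_forall_inner_neg_of_sum_smul_eq_zero {ι E : Type*} [Fintype ι]
    [NormedAddCommGroup E] [InnerProductSpace ℝ E] {u : ι → ℝ} {v : ι → E}
    (hu : ∀ i, 0 ≤ u i) (hpos : 0 < ∑ i, u i) (hv : ∑ i, u i • v i = 0) :
    ¬ ∃ d : E, ∀ i, ⟪v i, d⟫ < 0 := by
  rintro ⟨d, hd⟩
  have hzero : ∑ i, u i * ⟪v i, d⟫ = 0 := by
    simpa only [sum_inner, real_inner_smul_left, inner_zero_left] using congrArg (⟪·, d⟫) hv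
  obtain ⟨j, -, hj⟩ := Finset.exists_lt_of_sum_lt (hpos.trans_eq' Finset.sum_const_zero.symm)
  have hneg : ∑ i, u i * ⟪v i, d⟫ < 0 :=
    Finset.sum_neg' (fun i _ => mul_nonpos_of_nonneg_of_nonpos (hu i) (hd i).le)
      ⟨j, Finset.mem_univ j, mul_neg_of_pos_of_neg hj (hd j)⟩
  exact hneg.ne hzero

theorem kkt_pseudoconvex_weakly_efficient_general
    {n m : ℕ} (g : Fin (m+1) → EuclideanSpace ℝ (Fin n) → ℝ)
    (g' : Fin (m+1) → EuclideanSpace ℝ (Fin n) → EuclideanSpace ℝ (Fin n))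
    (hpc : ∀ i, ∀ x y : EuclideanSpace ℝ (Fin n), g i y < g i x → ⟪g' i x, y - x⟫ < 0)
    (θstar : EuclideanSpace ℝ (Fin n)) (ubar : Fin (m+1) → ℝ)
    (hu_nonneg : ∀ i, 0 ≤ ubar i)
    (hu_sum : ∑ i, ubar i = 1)
    (hu_grad : ∑ i, ubar i • g' i θstar = 0) :
    ¬ ∃ θ : EuclideanSpace ℝ (Fin n), ∀ i, g i θ < g i θstar := by
  rintro ⟨θ, hθ⟩
  exact not_exists_forall_inner_neg_of_sum_smul_eq_zero hu_nonneg (hu_sum ▸ one_pos) hu_grad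
    ⟨θ - θstar, fun i => hpc i θstar θ (hθ i)⟩

/-- Part (3) of Theorem 4.1: if the `g_i` are differentiable and pseudoconvex and `θ*`
satisfies the KKT stationarity conditions for `min max_i g_i`, then `θ*` is a weakly
efficient point of the multiobjective problem. -/
theorem kkt_pseudoconvex_weakly_efficient
    {n m : ℕ} (g : Fin (m+1) → EuclideanSpace ℝ (Fin n) → ℝ)
    (g' : Fin (m+1) → EuclideanSpace ℝ (Fin n) → EuclideanSpace ℝ (Fin n))
    (hg : ∀ i x, HasGradientAt (g i) (g' i x) x)
    (hpc : ∀ i, ∀ x y : EuclideanSpace ℝ (Fin n), g i y < g i x → ⟪g' i x, y - x⟫ < 0)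
    (θstar : EuclideanSpace ℝ (Fin n)) (ubar : Fin (m+1) → ℝ)
    (hu_nonneg : ∀ i, 0 ≤ ubar i)
    (hu_sum : ∑ i, ubar i = 1)
    (hu_grad : ∑ i, ubar i • g' i θstar = 0)
    (hu_comp : ∀ i, ubar i * (g i θstar - maxFun g θstar) = 0) :
    ¬ ∃ θ : EuclideanSpace ℝ (Fin n), ∀ i, g i θ < g i θstar :=
  kkt_pseudoconvex_weakly_efficient_general g g' hpc θstar ubar hu_nonneg hu_sum hu_grad
end
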